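/- Let g, h be smooth functions on an open set of ℝ^n with h ≥ c > 0, and suppose all partial derivatives of g and h of order ≤ l are bounded by M ≥ c in absolute value. Then every partial derivative of 1/h of order ≤ l is bounded by C(l, n) · M^l / c^{l+1} for some constant C(l,n) depending only on l and n. -/

import Mathlib

lemma inv_iteratedDeriv (j : ℕ) : ∀ y : ℝ, y ≠ 0 →
    iteratedDeriv j (Inv.inv : ℝ → ℝ) y = (-1) ^ j * (j.factorial : ℝ) * y ^ (-(j : ℤ) - 1) := by
  induction j with
  | zero => intro y hy; simp [zpow_neg_one]
  | succ j ih =>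
    intro y hy
    rw [iteratedDeriv_succ]
    have h1 : deriv (iteratedDeriv j (Inv.inv : ℝ → ℝ)) y
        = deriv (fun z : ℝ => (-1) ^ j * (j.factorial : ℝ) * z ^ (-(j : ℤ) - 1)) y := by
      apply Filter.EventuallyEq.deriv_eq
      filter_upwards [isOpen_compl_singleton.mem_nhds hy] with z hz using ih z hz
    rw [h1]
    have h2 : HasDerivAt (fun z : ℝ => z ^ (-(j : ℤ) - 1))
        (((-(j : ℤ) - 1 : ℤ) : ℝ) * y ^ (-(j : ℤ) - 1 - 1)) y := hasDerivAt_zpow _ _ (Or.inl hy)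
    rw [(h2.const_mul _).deriv]
    have he : (-(j : ℤ) - 1 - 1) = (-((j:ℕ)+1 : ℕ) - 1 : ℤ) := by push_cast; ring
    rw [he]
    push_cast [Nat.factorial_succ, pow_succ]
    ring

/-- Derivatives of a reciprocal: if g, h are smooth on an open set U ⊆ ℝⁿ with
h ≥ c > 0, and all derivatives of g and h of order ≤ l are bounded by M ≥ c, then
every derivative of 1/h of order ≤ l is bounded by C(l,n) · Mˡ / c^{l+1}, for a
constant C(l,n) depending only on l and n. -/
theorem reciprocal_derivative_bound (l n : ℕ) :
    ∃ C : ℝ, 0 < C ∧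
      ∀ (U : Set (EuclideanSpace ℝ (Fin n))), IsOpen U →
      ∀ (g h : EuclideanSpace ℝ (Fin n) → ℝ) (c M : ℝ), 0 < c → c ≤ M →
      ContDiffOn ℝ (⊤ : ℕ∞) g U → ContDiffOn ℝ (⊤ : ℕ∞) h U →
      (∀ x ∈ U, c ≤ h x) →
      (∀ x ∈ U, ∀ i ≤ l, ‖iteratedFDerivWithin ℝ i g U x‖ ≤ M) →
      (∀ x ∈ U, ∀ i ≤ l, ‖iteratedFDerivWithin ℝ i h U x‖ ≤ M) →
      ∀ x ∈ U, ∀ i ≤ l,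
        ‖iteratedFDerivWithin ℝ i (fun y => (h y)⁻¹) U x‖ ≤
          C * M ^ l / c ^ (l + 1) := by
  refine ⟨(l.factorial : ℝ) ^ 2, by positivity, ?_⟩
  intro U hU g h c M hc hcM hg hh hch hgb hhb x hx i hil
  have hUd : UniqueDiffOn ℝ U := hU.uniqueDiffOn
  have hc0 : c ≠ 0 := ne_of_gt hc
  have hM : 0 < M := lt_of_lt_of_le hc hcM
  set ht : EuclideanSpace ℝ (Fin n) → ℝ := fun y => c⁻¹ • h y with hht
  have hhtc : ContDiffOn ℝ (⊤ : ℕ∞) ht U := hh.const_smul _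
  have hone : ∀ y ∈ U, (1 : ℝ) ≤ ht y := by
    intro y hy
    rw [hht]
    simp only [smul_eq_mul]
    rw [le_inv_mul_iff₀ hc, mul_one]
    exact hch y hy
  have hmaps : Set.MapsTo ht U (Set.Ioi (2⁻¹ : ℝ)) := by
    intro y hy
    have := hone y hy
    simp only [Set.mem_Ioi]
    linarith
  have hIod : UniqueDiffOn ℝ (Set.Ioi (2⁻¹ : ℝ)) := isOpen_Ioi.uniqueDiffOn
  have hsub : Set.Ioi (2⁻¹ : ℝ) ⊆ {0}ᶜ := by
    intro z hz
    simp only [Set.mem_compl_iff, Set.mem_singleton_iff]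
    have := Set.mem_Ioi.mp hz
    intro h0; rw [h0] at this; norm_num at this
  have hinv : ContDiffOn ℝ (⊤ : ℕ∞) (Inv.inv : ℝ → ℝ) (Set.Ioi (2⁻¹ : ℝ)) :=
    (contDiffOn_inv ℝ).mono hsub
  -- bound on derivatives of inv at ht x
  have hC : ∀ j, j ≤ i → ‖iteratedFDerivWithin ℝ j (Inv.inv : ℝ → ℝ)
      (Set.Ioi (2⁻¹ : ℝ)) (ht x)‖ ≤ (i.factorial : ℝ) := by
    intro j hj
    have hy1 : (1 : ℝ) ≤ ht x := hone x hx
    have hy0 : ht x ≠ 0 := by linarith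
    rw [iteratedFDerivWithin_of_isOpen j isOpen_Ioi (hmaps hx),
      norm_iteratedFDeriv_eq_norm_iteratedDeriv, inv_iteratedDeriv j (ht x) hy0]
    rw [Real.norm_eq_abs, abs_mul, abs_mul, abs_pow, abs_neg, abs_one, one_pow, one_mul,
      Nat.abs_cast]
    have hz1 : ht x ^ (-(j : ℤ) - 1) ≤ 1 := by
      apply zpow_le_one_of_nonpos₀ hy1
      omega
    have hz0 : (0:ℝ) ≤ ht x ^ (-(j : ℤ) - 1) := le_of_lt (zpow_pos (by linarith) _)
    rw [abs_of_nonneg hz0]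
    calc (j.factorial : ℝ) * ht x ^ (-(j : ℤ) - 1) ≤ (j.factorial : ℝ) * 1 := by
          exact mul_le_mul_of_nonneg_left hz1 (by positivity)
      _ ≤ (i.factorial : ℝ) := by
          rw [mul_one]; exact_mod_cast Nat.factorial_le hj
  have hMc1 : (1:ℝ) ≤ M / c := (one_le_div hc).mpr hcM
  have hD : ∀ j, 1 ≤ j → j ≤ i → ‖iteratedFDerivWithin ℝ j ht U x‖ ≤ (M / c) ^ j := by
    intro j hj1 hji
    have : iteratedFDerivWithin ℝ j ht U x = c⁻¹ • iteratedFDerivWithin ℝ j h U x :=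
      iteratedFDerivWithin_const_smul_apply (a := c⁻¹) ((hh x hx).of_le (by exact_mod_cast le_top)) hUd hx
    rw [this, norm_smul, Real.norm_eq_abs, abs_of_pos (by positivity)]
    calc c⁻¹ * ‖iteratedFDerivWithin ℝ j h U x‖ ≤ c⁻¹ * M := by
          exact mul_le_mul_of_nonneg_left (hhb x hx j (le_trans hji hil)) (by positivity)
      _ = M / c := by ring
      _ ≤ (M / c) ^ j := le_self_pow₀ hMc1 (by omega)
  have key := norm_iteratedFDerivWithin_comp_le hinv hhtc (by exact_mod_cast le_top) hIod hUd hmaps hx hC hD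
  have hcomp : ContDiffOn ℝ (⊤ : ℕ∞) ((Inv.inv : ℝ → ℝ) ∘ ht) U := hinv.comp hhtc hmaps
  have heq : iteratedFDerivWithin ℝ i (fun y => (h y)⁻¹) U x
      = c⁻¹ • iteratedFDerivWithin ℝ i ((Inv.inv : ℝ → ℝ) ∘ ht) U x := by
    rw [← iteratedFDerivWithin_const_smul_apply ((hcomp x hx).of_le (by exact_mod_cast le_top)) hUd hx]
    congr 1
    funext y
    simp only [Pi.smul_apply, Function.comp_apply, hht, smul_eq_mul, mul_inv]
    field_simp
  rw [heq, norm_smul, Real.norm_eq_abs, abs_of_pos (by positivity)]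
  have step : c⁻¹ * ‖iteratedFDerivWithin ℝ i ((Inv.inv : ℝ → ℝ) ∘ ht) U x‖
      ≤ c⁻¹ * ((i.factorial : ℝ) * (i.factorial : ℝ) * (M / c) ^ i) :=
    mul_le_mul_of_nonneg_left key (by positivity)
  refine le_trans step ?_
  obtain ⟨k, rfl⟩ : ∃ k, l = i + k := ⟨l - i, by omega⟩
  have hfac : (i.factorial : ℝ) ≤ ((i + k).factorial : ℝ) := by
    exact_mod_cast Nat.factorial_le (Nat.le_add_right i k)
  have hck : c ^ k ≤ M ^ k := pow_le_pow_left₀ hc.le hcM k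
  have hfac2 : ((i.factorial : ℝ)) ^ 2 ≤ ((i + k).factorial : ℝ) ^ 2 :=
    pow_le_pow_left₀ (by positivity) hfac 2
  have lhs_eq : c⁻¹ * ((i.factorial : ℝ) * (i.factorial : ℝ) * (M / c) ^ i)
      = (i.factorial : ℝ) ^ 2 * M ^ i / c ^ (i + 1) := by
    field_simp
    rw [div_pow, pow_succ, ← mul_assoc, div_mul_cancel₀ _ (pow_ne_zero i hc0), mul_comm]
  rw [lhs_eq, div_le_div_iff₀ (by positivity) (by positivity)]
  calc (i.factorial : ℝ) ^ 2 * M ^ i * c ^ (i + k + 1)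
      = ((i.factorial : ℝ) ^ 2 * M ^ i * c ^ (i + 1)) * c ^ k := by
        rw [show i + k + 1 = (i + 1) + k from by ring, pow_add]; ring
    _ ≤ (((i + k).factorial : ℝ) ^ 2 * M ^ i * c ^ (i + 1)) * M ^ k := by
        apply mul_le_mul _ hck (by positivity) (by positivity)
        apply mul_le_mul_of_nonneg_right (mul_le_mul_of_nonneg_right hfac2 (by positivity))
          (by positivity)
    _ = ((i + k).factorial : ℝ) ^ 2 * M ^ (i + k) * c ^ (i + 1) := by
        rw [pow_add]; ring
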